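/- For every real α > 2 and every real x ≥ 0: e^{−x} · ∑_{i=2}^∞ [Γ(1+α/2)·Γ(i)/Γ(i+α/2)] · (∑_{k=i}^∞ x^k/k!) = 2/(α−2) − (α/(α−2))·F₁(x) − (4x/(α²−4))·F₂(x) + e^{−x}, where F_n(x) = ∑_{m=0}^∞ [(α/2)_m/(n+α/2)_m]·(−x)^m/m! and (a)_m = Γ(a+m)/Γ(a) is the Pochhammer symbol. -/

import Mathlib

/-!
Put `c = α/2` and `T_j = ∑_{k ≥ j} x^k/k!`. Since `(c-1)·n!/Γ(n+1+c) = b_n - b_{n+1}` for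
`b_n = n!/Γ(n+c)` and `T_n = x^n/n! + T_{n+1}`, summation by parts collapses the double series to
`e^x/Γ(c) - ∑ x^n/Γ(n+c)`, and the last series is `₁F₁(1; c; x)/Γ(c)`. Kummer's transformation
`₁F₁(1; c; x) = e^x ₁F₁(c-1; c; -x)` comes from a Cauchy product with the exponential series, whose
coefficients are the iterated finite differences `∑_k (-1)^k C(n,k)/(k+s) = n! Γ(s)/Γ(n+s+1)` of
`y ↦ 1/(y+s)`. Finally the contiguous relation `c(c-1)/(m+c-1) = c²/(c+m) - cm/((c+m-1)(c+m))`
splits `₁F₁(c-1; c; -x)` into `F₁` and `F₂`.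
-/

/-- The Pochhammer symbol (rising factorial) `(a)_m = Γ(a+m)/Γ(a)`. -/
noncomputable def poch (a : ℝ) (m : ℕ) : ℝ := Real.Gamma (a + m) / Real.Gamma a

/-- The confluent hypergeometric series
`F_n(x) = ∑_{m=0}^∞ [(α/2)_m/(n+α/2)_m]·(−x)^m/m!`. -/
noncomputable def Fhyp (α : ℝ) (n : ℕ) (x : ℝ) : ℝ :=
  ∑' m : ℕ, poch (α / 2) m / poch ((n : ℝ) + α / 2) m * (-x) ^ m / (m.factorial : ℝ)

open Real Finset fwdDiff
open scoped Nat

lemma summable_norm_mul_pow_div_factorial {C : ℕ → ℝ} {B : ℝ} (hC : ∀ n, |C n| ≤ B) (x : ℝ) :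
    Summable fun n => ‖C n * x ^ n / (n !)‖ := by
  refine ((Real.summable_pow_div_factorial |x|).mul_left B).of_nonneg_of_le
    (fun _ => norm_nonneg _) fun n => ?_
  rw [norm_div, norm_mul, norm_pow, Real.norm_natCast, Real.norm_eq_abs, Real.norm_eq_abs,
    mul_div_assoc]
  gcongr
  exact hC n

noncomputable def expTail (x : ℝ) (j : ℕ) : ℝ := ∑' k : ℕ, x ^ (k + j) / (k + j)!

section ExpTail

variable (x : ℝ)

lemma expTail_zero : expTail x 0 = exp x := by
  rw [Real.exp_eq_exp_ℝ, ← (NormedSpace.expSeries_div_hasSum_exp x).tsum_eq]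
  rfl

lemma expTail_eq_add (j : ℕ) : expTail x j = x ^ j / j ! + expTail x (j + 1) := by
  rw [expTail,
    ((summable_nat_add_iff j).mpr (Real.summable_pow_div_factorial x)).tsum_eq_zero_add]
  simp only [zero_add, expTail, add_right_comm _ 1 j, add_assoc]

lemma abs_expTail_le (j : ℕ) : |expTail x j| ≤ |x| ^ j / j ! * exp |x| := by
  have hbound (k : ℕ) : ‖x ^ (k + j) / (k + j)!‖ ≤ |x| ^ j / j ! * (|x| ^ k / k !) := by
    have hfac : (k ! * j ! : ℝ) ≤ (k + j)! := by
      exact_mod_cast Nat.le_of_dvd (Nat.factorial_pos _)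
        (Nat.factorial_mul_factorial_dvd_factorial_add k j)
    rw [norm_div, norm_pow, Real.norm_natCast, Real.norm_eq_abs, pow_add]
    calc |x| ^ k * |x| ^ j / (k + j)! ≤ |x| ^ k * |x| ^ j / (k ! * j !) := by gcongr
      _ = _ := by ring
  have hsum := (Real.summable_pow_div_factorial |x|).mul_left (|x| ^ j / j !)
  calc |expTail x j| ≤ ∑' k : ℕ, ‖x ^ (k + j) / (k + j)!‖ :=
        norm_tsum_le_tsum_norm (hsum.of_nonneg_of_le (fun _ => norm_nonneg _) hbound)
    _ ≤ ∑' k : ℕ, |x| ^ j / j ! * (|x| ^ k / k !) :=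
        Summable.tsum_le_tsum hbound (hsum.of_nonneg_of_le (fun _ => norm_nonneg _) hbound) hsum
    _ = |x| ^ j / j ! * exp (|x|) := by rw [tsum_mul_left, ← expTail_zero]; rfl

lemma expTail_one : expTail x 1 = exp x - 1 := by
  rw [eq_sub_iff_add_eq', ← expTail_zero, expTail_eq_add x 0, pow_zero, Nat.factorial_zero,
    Nat.cast_one, div_one]

end ExpTail

lemma Gamma_mul_factorial_le_Gamma_add {c : ℝ} (hc : 1 ≤ c) (n : ℕ) :
    Gamma c * n ! ≤ Gamma (n + c) := by
  induction n with
  | zero => simp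
  | succ n ih =>
    have hnc : 0 < (n : ℝ) + c := by positivity
    rw [Nat.factorial_succ, Nat.cast_mul, Nat.cast_succ, add_right_comm, Gamma_add_one hnc.ne']
    calc Gamma c * ((n + 1) * n !) = (n + 1) * (Gamma c * n !) := by ring
      _ ≤ (n + c) * Gamma (n + c) := by gcongr

lemma abs_factorial_div_Gamma_le {c : ℝ} (hc : 1 ≤ c) (n : ℕ) :
    |n ! / Gamma (n + c)| ≤ (Gamma c)⁻¹ := by
  have hΓc := Gamma_pos_of_pos (by linarith : 0 < c)
  have hΓ := Gamma_pos_of_pos (by positivity : 0 < (n : ℝ) + c)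
  rw [abs_of_nonneg (by positivity), div_le_iff₀ hΓ, inv_mul_eq_div, le_div_iff₀ hΓc, mul_comm]
  exact Gamma_mul_factorial_le_Gamma_add hc n

lemma summable_pow_div_Gamma {c : ℝ} (hc : 1 ≤ c) (x : ℝ) :
    Summable fun n : ℕ => x ^ n / Gamma (n + c) := by
  refine (summable_norm_mul_pow_div_factorial (abs_factorial_div_Gamma_le hc) x).of_norm.congr
    fun n => ?_
  field_simp

lemma sub_one_mul_factorial_div_Gamma {c : ℝ} (hc : 0 < c) (n : ℕ) :
    (c - 1) * (n ! / Gamma (n + 1 + c))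
      = n ! / Gamma (n + c) - (n + 1)! / Gamma ((n + 1 : ℕ) + c) := by
  have hnc : 0 < (n : ℝ) + c := by positivity
  have hΓ := (Gamma_pos_of_pos hnc).ne'
  rw [Nat.cast_succ, add_right_comm, Gamma_add_one hnc.ne', Nat.factorial_succ, Nat.cast_mul,
    Nat.cast_succ]
  field_simp
  ring

theorem hasSum_sub_mul_tail {R : Type*} [Ring R] [TopologicalSpace R] [IsTopologicalRing R]
    {b T t : ℕ → R} {s : R} (hT : ∀ n, T n = t n + T (n + 1))
    (hbT : Summable fun n => b n * T n) (hbt : HasSum (fun n => b n * t n) s) :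
    HasSum (fun n => (b n - b (n + 1)) * T (n + 1)) (b 0 * T 0 - s) := by
  have hshift := (hasSum_nat_add_iff' 1).mpr hbT.hasSum
  rw [range_one, sum_singleton] at hshift
  have hsplit : (fun n => (b n - b (n + 1)) * T (n + 1))
      = fun n => b n * T n - b n * t n - b (n + 1) * T (n + 1) := by
    funext n
    rw [hT n]
    noncomm_ring
  rw [hsplit, show b 0 * T 0 - s = ∑' n, b n * T n - s - (∑' n, b n * T n - b 0 * T 0) by abel]
  exact (hbT.hasSum.sub hbt).sub hshift

lemma hasSum_sub_one_mul_factorial_div_Gamma_mul_expTail {c : ℝ} (hc : 1 < c) (x : ℝ) :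
    HasSum (fun n : ℕ => (c - 1) * (n ! / Gamma (n + 1 + c)) * expTail x (n + 1))
      (exp x / Gamma c - ∑' n : ℕ, x ^ n / Gamma (n + c)) := by
  have hb := abs_factorial_div_Gamma_le hc.le
  have hbT : Summable fun n : ℕ => n ! / Gamma (n + c) * expTail x n := by
    refine (((Real.summable_pow_div_factorial |x|).mul_right (exp |x|)).mul_left
      (Gamma c)⁻¹).of_norm_bounded fun n => ?_
    rw [norm_mul, Real.norm_eq_abs, Real.norm_eq_abs]
    exact mul_le_mul (hb n) (abs_expTail_le x n) (abs_nonneg _) (by positivity)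
  have hbt : HasSum (fun n : ℕ => n ! / Gamma (n + c) * (x ^ n / n !))
      (∑' n : ℕ, x ^ n / Gamma (n + c)) := by
    convert (summable_pow_div_Gamma hc.le x).hasSum using 1
    funext n
    field_simp
  have h := hasSum_sub_mul_tail (expTail_eq_add x) hbT hbt
  simp only [← sub_one_mul_factorial_div_Gamma (by linarith : 0 < c)] at h
  simpa only [Nat.factorial_zero, Nat.cast_one, Nat.cast_zero, zero_add, expTail_zero,
    one_div_mul_eq_div] using h

lemma sub_one_mul_tsum_Gamma_mul_expTail {c : ℝ} (hc : 1 < c) (x : ℝ) :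
    (c - 1) * ∑' i : ℕ, Gamma (1 + c) * Gamma ((i : ℝ) + 2) / Gamma ((i : ℝ) + 2 + c) *
        expTail x (i + 2)
      = exp x + c - 1 - Gamma (1 + c) * ∑' n : ℕ, x ^ n / Gamma (n + c) := by
  have hΓc := (Gamma_pos_of_pos (by linarith : 0 < c)).ne'
  have hΓ1c : Gamma (1 + c) = c * Gamma c := by rw [add_comm, Gamma_add_one (by linarith)]
  have hshift := ((hasSum_nat_add_iff' 1).mpr
    (hasSum_sub_one_mul_factorial_div_Gamma_mul_expTail hc x)).mul_left (Gamma (1 + c))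
  have hterm (i : ℕ) :
      (c - 1) * (Gamma (1 + c) * Gamma ((i : ℝ) + 2) / Gamma ((i : ℝ) + 2 + c) * expTail x (i + 2))
        = Gamma (1 + c) *
          ((c - 1) * ((i + 1 : ℕ)! / Gamma ((i + 1 : ℕ) + 1 + c)) * expTail x (i + 1 + 1)) := by
    rw [← Gamma_nat_eq_factorial]
    push_cast
    ring_nf
  rw [← tsum_mul_left, tsum_congr hterm, hshift.tsum_eq, range_one, sum_singleton, expTail_one]
  simp only [Nat.cast_zero, zero_add, Nat.factorial_zero, Nat.cast_one, hΓ1c]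
  field_simp
  ring

lemma fwdDiff_Gamma_div_Gamma {s : ℝ} (hs : 0 < s) (n : ℕ) :
    Δ_[1] (fun y : ℕ => Gamma (y + s) / Gamma (y + s + n + 1))
      = fun y : ℕ => -(n + 1) * (Gamma (y + s) / Gamma (y + s + (n + 1 : ℕ) + 1)) := by
  funext y
  have hys : 0 < (y : ℝ) + s := by positivity
  have hysn : 0 < (y : ℝ) + s + n + 1 := by positivity
  have hΓ := (Gamma_pos_of_pos hys).ne'
  have hΓn := (Gamma_pos_of_pos hysn).ne'
  simp only [fwdDiff, Nat.cast_add, Nat.cast_one]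
  rw [add_right_comm _ 1 s, Gamma_add_one hys.ne',
    show (y : ℝ) + s + 1 + n + 1 = (y + s + n + 1) + 1 by ring,
    show (y : ℝ) + s + (n + 1) + 1 = (y + s + n + 1) + 1 by ring, Gamma_add_one hysn.ne']
  field_simp
  ring

lemma fwdDiff_iter_inv_add {s : ℝ} (hs : 0 < s) (n : ℕ) :
    Δ_[1] ^[n] (fun y : ℕ => ((y : ℝ) + s)⁻¹)
      = fun y : ℕ => (-1) ^ n * n ! * (Gamma (y + s) / Gamma (y + s + n + 1)) := by
  induction n with
  | zero =>
    funext y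
    have hys : 0 < (y : ℝ) + s := by positivity
    have hΓ := (Gamma_pos_of_pos hys).ne'
    simp only [Function.iterate_zero, id_eq, pow_zero, Nat.factorial_zero, Nat.cast_one, one_mul,
      Nat.cast_zero, add_zero, Gamma_add_one hys.ne']
    field_simp
  | succ n ih =>
    rw [Function.iterate_succ_apply', ih]
    funext y
    have h := congrFun (fwdDiff_Gamma_div_Gamma hs n) y
    simp only [fwdDiff] at h ⊢
    rw [← mul_sub, h, Nat.factorial_succ]
    push_cast
    ring

lemma sum_range_neg_one_pow_mul_choose_div {s : ℝ} (hs : 0 < s) (n : ℕ) :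
    ∑ k ∈ range (n + 1), (-1) ^ k * n.choose k / (k + s)
      = n ! * (Gamma s / Gamma (n + s + 1)) := by
  have h := fwdDiff_iter_eq_sum_shift 1 (fun y : ℕ => ((y : ℝ) + s)⁻¹) n 0
  rw [fwdDiff_iter_inv_add hs] at h
  simp only [Nat.cast_zero, zero_add, smul_eq_mul, mul_one, zsmul_eq_mul, Int.cast_mul,
    Int.cast_pow, Int.cast_neg, Int.cast_one, Int.cast_natCast] at h
  have hsign {k : ℕ} (hk : k ≤ n) : (-1 : ℝ) ^ k = (-1) ^ n * (-1) ^ (n - k) := by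
    rw [← pow_add, show n + (n - k) = k + 2 * (n - k) by omega, pow_add, pow_mul]
    simp
  calc ∑ k ∈ range (n + 1), (-1) ^ k * n.choose k / (k + s)
      = (-1) ^ n * ∑ k ∈ range (n + 1), (-1) ^ (n - k) * n.choose k * (k + s)⁻¹ := by
        rw [mul_sum]
        refine sum_congr rfl fun k hk => ?_
        rw [hsign (Nat.lt_succ_iff.mp (mem_range.mp hk))]
        ring
    _ = n ! * (Gamma s / Gamma (n + s + 1)) := by
        rw [← h, ← mul_assoc, ← mul_assoc, ← pow_add, Even.neg_one_pow ⟨n, rfl⟩, one_mul,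
          add_comm s]

theorem exp_mul_tsum_inv_add_mul_neg_pow {s : ℝ} (hs : 0 < s) (x : ℝ) :
    exp x * ∑' m : ℕ, (m + s)⁻¹ * (-x) ^ m / m !
      = Gamma s * ∑' n : ℕ, x ^ n / Gamma (n + s + 1) := by
  have hu : Summable fun m : ℕ => ‖(m + s)⁻¹ * (-x) ^ m / (m !)‖ := by
    refine summable_norm_mul_pow_div_factorial (B := s⁻¹) (fun m => ?_) (-x)
    rw [abs_inv, abs_of_pos (by positivity)]
    gcongr
    linarith [(m.cast_nonneg : (0 : ℝ) ≤ m)]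
  rw [Real.exp_eq_exp_ℝ, ← (NormedSpace.expSeries_div_hasSum_exp x).tsum_eq, mul_comm,
    tsum_mul_tsum_eq_tsum_sum_range_of_summable_norm hu
      (NormedSpace.norm_expSeries_div_summable x), ← tsum_mul_left]
  refine tsum_congr fun n => ?_
  calc ∑ k ∈ range (n + 1), (k + s)⁻¹ * (-x) ^ k / k ! * (x ^ (n - k) / (n - k)!)
      = x ^ n / n ! * ∑ k ∈ range (n + 1), (-1) ^ k * n.choose k / (k + s) := by
        rw [mul_sum]
        refine sum_congr rfl fun k hk => ?_
        have hkn := Nat.lt_succ_iff.mp (mem_range.mp hk)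
        rw [Nat.cast_choose ℝ hkn, neg_pow, ← pow_mul_pow_sub x hkn]
        field_simp
    _ = Gamma s * (x ^ n / Gamma (n + s + 1)) := by
        rw [sum_range_neg_one_pow_mul_choose_div hs]
        field_simp

lemma poch_div_poch (a : ℝ) (m n : ℕ) :
    poch a m / poch (n + a) m = poch a n / poch (a + m) n := by
  unfold poch
  rw [add_comm (n : ℝ) a, add_right_comm, div_div_div_eq, div_div_div_eq]
  ring

lemma poch_one {a : ℝ} (ha : 0 < a) : poch a 1 = a := by
  rw [poch, Nat.cast_one, Gamma_add_one ha.ne', mul_div_cancel_right₀ _ (Gamma_pos_of_pos ha).ne']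

lemma poch_two {a : ℝ} (ha : 0 < a) : poch a 2 = a * (a + 1) := by
  rw [poch, Nat.cast_two, show a + 2 = a + 1 + 1 by ring, Gamma_add_one (by positivity),
    Gamma_add_one ha.ne']
  field_simp [(Gamma_pos_of_pos ha).ne']

lemma Fhyp_eq_tsum (α : ℝ) (n : ℕ) (x : ℝ) :
    Fhyp α n x = ∑' m : ℕ, poch (α / 2) n / poch (α / 2 + m) n * (-x) ^ m / m ! := by
  simp only [Fhyp, poch_div_poch]

lemma Fhyp_one_eq {α : ℝ} (hα : 0 < α) (x : ℝ) :
    Fhyp α 1 x = ∑' m : ℕ, α / 2 / (α / 2 + m) * (-x) ^ m / m ! := by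
  rw [Fhyp_eq_tsum]
  exact tsum_congr fun m => by rw [poch_one (by positivity), poch_one (by positivity)]

lemma Fhyp_two_eq {α : ℝ} (hα : 0 < α) (x : ℝ) :
    Fhyp α 2 x
      = ∑' m : ℕ, α / 2 * (α / 2 + 1) / ((α / 2 + m) * (α / 2 + m + 1)) * (-x) ^ m / m ! := by
  rw [Fhyp_eq_tsum]
  exact tsum_congr fun m => by rw [poch_two (by positivity), poch_two (by positivity)]

lemma mul_sub_one_mul_tsum_inv_add_sub_one {c : ℝ} (hc : 1 < c) (x : ℝ) :
    c * (c - 1) * ∑' m : ℕ, (m + (c - 1))⁻¹ * (-x) ^ m / m !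
      = c * ∑' m : ℕ, c / (c + m) * (-x) ^ m / m !
        + x / (c + 1) * ∑' m : ℕ, c * (c + 1) / ((c + m) * (c + m + 1)) * (-x) ^ m / m ! := by
  have hcm (m : ℕ) : 0 < c + m := by positivity
  have hF1 : Summable fun m : ℕ => c / (c + m) * (-x) ^ m / m ! := by
    refine (summable_norm_mul_pow_div_factorial (B := 1) (fun m => ?_) (-x)).of_norm
    rw [abs_of_pos (div_pos (by linarith) (hcm m)), div_le_one (hcm m)]
    linarith [(m.cast_nonneg : (0 : ℝ) ≤ m)]
  have hF2 :
      Summable fun m : ℕ => c * (c + 1) / ((c + m) * (c + m + 1)) * (-x) ^ m / m ! := by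
    refine (summable_norm_mul_pow_div_factorial (B := 1) (fun m => ?_) (-x)).of_norm
    have hm : (0 : ℝ) ≤ m := m.cast_nonneg
    rw [abs_of_pos (by positivity), div_le_one (by positivity)]
    nlinarith
  set g : ℕ → ℝ := fun m => -(c * m / ((m + (c - 1)) * (c + m))) * (-x) ^ m / m ! with hg
  have hg_shift : HasSum (fun m => g (m + 1))
      (x / (c + 1) * ∑' m : ℕ, c * (c + 1) / ((c + m) * (c + m + 1)) * (-x) ^ m / m !) := by
    have hterm : (fun m => g (m + 1)) = fun m : ℕ =>
        x / (c + 1) * (c * (c + 1) / ((c + m) * (c + m + 1)) * (-x) ^ m / m !) := by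
      funext m
      have := hcm m
      simp only [hg, Nat.cast_add, Nat.cast_one, Nat.factorial_succ, Nat.cast_mul, pow_succ]
      rw [show (m : ℝ) + 1 + (c - 1) = c + m by ring, show c + (m + 1) = c + m + 1 by ring]
      field_simp
    rw [hterm]
    exact hF2.hasSum.mul_left _
  have hsum := (hF1.hasSum.mul_left c).add ((hasSum_nat_add_iff 1).mp hg_shift)
  rw [range_one, sum_singleton, hg] at hsum
  simp only [Nat.cast_zero, mul_zero, zero_div, neg_zero, zero_mul, add_zero] at hsum
  rw [← hsum.tsum_eq, ← tsum_mul_left]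
  refine tsum_congr fun m => ?_
  have := hcm m
  have : 0 < m + (c - 1) := by positivity
  field_simp
  ring

lemma Gamma_one_add_mul_tsum_pow_div_Gamma {c : ℝ} (hc : 1 < c) (x : ℝ) :
    Gamma (1 + c) * ∑' n : ℕ, x ^ n / Gamma (n + c)
      = exp x * (c * ∑' m : ℕ, c / (c + m) * (-x) ^ m / m !
        + x / (c + 1) * ∑' m : ℕ, c * (c + 1) / ((c + m) * (c + m + 1)) * (-x) ^ m / m !) := by
  have hΓ : Gamma (1 + c) = c * (c - 1) * Gamma (c - 1) := by
    have h := Gamma_add_one (s := c - 1) (by linarith)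
    rw [sub_add_cancel] at h
    rw [add_comm, Gamma_add_one (by linarith), h, mul_assoc]
  have hkummer := exp_mul_tsum_inv_add_mul_neg_pow (sub_pos.2 hc) x
  simp only [add_assoc, sub_add_cancel] at hkummer
  rw [hΓ, ← mul_sub_one_mul_tsum_inv_add_sub_one hc x]
  linear_combination -c * (c - 1) * hkummer

theorem stmt_9_general (α x : ℝ) (hα : 2 < α) :
    Real.exp (-x) *
        ∑' i : ℕ,
          Real.Gamma (1 + α / 2) * Real.Gamma ((i : ℝ) + 2) / Real.Gamma ((i : ℝ) + 2 + α / 2) *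
            ∑' k : ℕ, x ^ (k + (i + 2)) / ((k + (i + 2)).factorial : ℝ)
      = 2 / (α - 2) - α / (α - 2) * Fhyp α 1 x - 4 * x / (α ^ 2 - 4) * Fhyp α 2 x
        + Real.exp (-x) := by
  rw [Fhyp_one_eq (by linarith), Fhyp_two_eq (by linarith)]
  obtain ⟨c, rfl⟩ : ∃ c, α = 2 * c := ⟨α / 2, by ring⟩
  have hc : 1 < c := by linarith
  have hc1 : c - 1 ≠ 0 := by linarith
  have hc2 : c + 1 ≠ 0 := by linarith
  have hS := sub_one_mul_tsum_Gamma_mul_expTail hc x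
  rw [Gamma_one_add_mul_tsum_pow_div_Gamma hc x] at hS
  simp only [expTail] at hS
  rw [mul_div_cancel_left₀ c two_ne_zero, eq_div_of_mul_eq hc1 ((mul_comm _ _).trans hS),
    exp_neg, show 2 * c - 2 = 2 * (c - 1) by ring,
    show (2 * c) ^ 2 - 4 = 4 * ((c - 1) * (c + 1)) by ring]
  field_simp
  ring

/-- Closed-form evaluation of `MISR_R` (Lemma 1): for `α > 2` and `x ≥ 0`,
`e^{−x}·∑_{i=2}^∞ [Γ(1+α/2)Γ(i)/Γ(i+α/2)]·(∑_{k=i}^∞ x^k/k!)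
 = 2/(α−2) − (α/(α−2))·F₁(x) − (4x/(α²−4))·F₂(x) + e^{−x}`. -/
theorem stmt_9 (α x : ℝ) (hα : 2 < α) (hx : 0 ≤ x) :
    Real.exp (-x) *
        ∑' i : ℕ,
          Real.Gamma (1 + α / 2) * Real.Gamma ((i : ℝ) + 2) / Real.Gamma ((i : ℝ) + 2 + α / 2) *
            ∑' k : ℕ, x ^ (k + (i + 2)) / ((k + (i + 2)).factorial : ℝ)
      = 2 / (α - 2) - α / (α - 2) * Fhyp α 1 x - 4 * x / (α ^ 2 - 4) * Fhyp α 2 x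
        + Real.exp (-x) :=
  stmt_9_general α x hα
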